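/- If b(t) is a symmetric solution of b' = b·m + a·b − (1/(2W))b + (1/(2W))b⁻¹ with a antisymmetric and m bounded, and b(0) is positive definite, then b(t) remains invertible (hence positive definite) on its maximal interval of existence. -/

import Mathlib

/-!
While `b` is positive definite, Jacobi's formula gives
`(det b)' = det b · tr (b⁻¹ b') = det b · (tr m + tr a - n / (2W) + tr (b⁻²) / (2W))`.
Here `tr a = 0` by antisymmetry and `tr (b⁻²) ≥ 0`, so `(det b)' ≥ -K det b` with
`K = n (C + 1 / (2W))`, `C` a bound for the entries of `m`. Hence `det b(t) ≥ det b(0) e^{-Kt} > 0`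
as long as `b` stays positive definite. A continuous path of symmetric matrices can only leave the
positive definite cone through a singular matrix, so it never leaves it.
-/

open Matrix Set Filter Topology Real

theorem isClosed_setOf_isHermitian {ι α : Type*} [TopologicalSpace α] [T2Space α] [Star α]
    [ContinuousStar α] : IsClosed {A : Matrix ι ι α | A.IsHermitian} :=
  isClosed_eq continuous_id.matrix_conjTranspose continuous_id

variable {ι : Type*} [Fintype ι]

theorem isClosed_setOf_posSemidef : IsClosed {A : Matrix ι ι ℝ | A.PosSemidef} := by
  simp only [posSemidef_iff_dotProduct_mulVec, ofPred_and, ofPred_forall]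
  exact isClosed_setOf_isHermitian.inter <| isClosed_iInter fun x => isClosed_le continuous_const
    (continuous_const.dotProduct (continuous_id.matrix_mulVec continuous_const))

theorem isClosed_setOf_isHermitian_and_not_posDef :
    IsClosed {A : Matrix ι ι ℝ | A.IsHermitian ∧ ¬ A.PosDef} := by
  -- it suffices to test the quadratic form on the unit sphere, which is compact
  have hZ : IsClosed {p : Matrix ι ι ℝ × Metric.sphere (0 : ι → ℝ) 1 |
      (p.2 : ι → ℝ) ⬝ᵥ p.1 *ᵥ p.2 ≤ 0} :=
    isClosed_le ((continuous_subtype_val.comp continuous_snd).dotProduct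
      (continuous_fst.matrix_mulVec (continuous_subtype_val.comp continuous_snd))) continuous_const
  convert isClosed_setOf_isHermitian.inter (isClosedMap_fst_of_compactSpace _ hZ) using 1
  ext A
  simp only [mem_ofPred_eq, mem_inter_iff, mem_image, Prod.exists, exists_and_right,
    exists_eq_right, Subtype.exists, Metric.mem_sphere, dist_zero_right]
  refine and_congr_right fun hA => ?_
  simp only [posDef_iff_dotProduct_mulVec, hA, true_and, star_trivial, not_forall, not_lt]
  constructor
  · rintro ⟨x, hx, hAx⟩
    refine ⟨‖x‖⁻¹ • x, norm_smul_inv_norm hx, ?_⟩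
    rw [mulVec_smul, dotProduct_smul, smul_dotProduct, smul_smul, smul_eq_mul]
    exact mul_nonpos_of_nonneg_of_nonpos (mul_self_nonneg _) hAx
  · rintro ⟨x, hx, hAx⟩
    exact ⟨x, by rintro rfl; simp at hx, hAx⟩

theorem hasDerivAt_det [DecidableEq ι] {𝕜 : Type*} [NontriviallyNormedField 𝕜]
    {b : 𝕜 → Matrix ι ι 𝕜} {b' : Matrix ι ι 𝕜} {t : 𝕜}
    (h : ∀ i j, HasDerivAt (fun s => b s i j) (b' i j) t) :
    HasDerivAt (fun s => (b s).det) (adjugate (b t) * b').trace t := by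
  have hprod (σ : Equiv.Perm ι) := HasDerivAt.fun_finsetProd (u := Finset.univ)
    (f := fun i s => b s (σ i) i) (fun i _ => h (σ i) i)
  have hsum := HasDerivAt.fun_sum (u := Finset.univ)
    fun σ _ => (hprod σ).const_mul ((Equiv.Perm.sign σ : ℤ) : 𝕜)
  -- the `i`-th diagonal entry of `adj b * b'` is the determinant of `b` with column `i` replaced
  have hdiag (i : ι) : (adjugate (b t) * b') i i = ∑ σ : Equiv.Perm ι,
      ((Equiv.Perm.sign σ : ℤ) : 𝕜) * ((∏ j ∈ Finset.univ.erase i, b t (σ j) j) • b' (σ i) i) := by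
    rw [show (adjugate (b t) * b') i i = ((b t).updateCol i fun k => b' k i).det by
      rw [← cramer_apply, cramer_eq_adjugate_mulVec]; rfl, det_apply']
    refine Finset.sum_congr rfl fun σ _ => ?_
    rw [← Finset.mul_prod_erase _ _ (Finset.mem_univ i), smul_eq_mul, mul_comm _ (b' _ _)]
    congr 2
    · simp
    · exact Finset.prod_congr rfl fun j hj => by simp [Finset.ne_of_mem_erase hj]
  have htrace : (adjugate (b t) * b').trace = ∑ σ : Equiv.Perm ι, ((Equiv.Perm.sign σ : ℤ) : 𝕜) *
      ∑ i, (∏ j ∈ Finset.univ.erase i, b t (σ j) j) • b' (σ i) i := by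
    simp only [Matrix.trace, Matrix.diag, hdiag, Finset.mul_sum]
    exact Finset.sum_comm
  simpa only [← det_apply', htrace] using hsum

theorem adjugate_eq_det_smul_inv [DecidableEq ι] {R : Type*} [CommRing R] {A : Matrix ι ι R}
    (h : IsUnit A.det) : adjugate A = A.det • A⁻¹ := by
  rw [inv_def, smul_smul, Ring.mul_inverse_cancel _ h, one_smul]

theorem trace_eq_zero_of_transpose_eq_neg {A : Matrix ι ι ℝ} (hA : Aᵀ = -A) : A.trace = 0 := by
  have := trace_transpose A
  rw [hA, trace_neg] at this
  linarith

theorem le_trace_inv_mul_oldroydB [DecidableEq ι] {B M A : Matrix ι ι ℝ} (hB : B.PosDef)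
    (hA : Aᵀ = -A) {c : ℝ} (hc : 0 ≤ c) :
    M.trace - c * Fintype.card ι ≤ (B⁻¹ * (B * M + A * B - c • B + c • B⁻¹)).trace := by
  have hdet : IsUnit B.det := (isUnit_iff_isUnit_det B).1 hB.isUnit
  have hM : (B⁻¹ * (B * M)).trace = M.trace := by rw [nonsing_inv_mul_cancel_left _ _ hdet]
  have hAB : (B⁻¹ * (A * B)).trace = 0 := by
    rw [trace_mul_comm, mul_nonsing_inv_cancel_right _ _ hdet,
      trace_eq_zero_of_transpose_eq_neg hA]
  have hcB : (B⁻¹ * (c • B)).trace = c * Fintype.card ι := by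
    rw [Matrix.mul_smul, nonsing_inv_mul _ hdet, trace_smul, trace_one, smul_eq_mul]
  have hinv : 0 ≤ (B⁻¹ * (c • B⁻¹)).trace := by
    have hsq : B⁻¹ * B⁻¹ = B⁻¹ᴴ * B⁻¹ := by rw [hB.inv.isHermitian.eq]
    rw [Matrix.mul_smul, trace_smul, hsq, smul_eq_mul]
    exact mul_nonneg hc (posSemidef_conjTranspose_mul_self _).trace_nonneg
  rw [mul_add, mul_sub, mul_add, trace_add, trace_sub, trace_add, hM, hAB, hcB]
  linarith

theorem mul_exp_le_mul_exp_of_hasDerivAt {f f' : ℝ → ℝ} {K x y : ℝ} (hxy : x ≤ y)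
    (hf : ContinuousOn f (Icc x y)) (hf' : ∀ t ∈ Ioo x y, HasDerivAt f (f' t) t)
    (hbound : ∀ t ∈ Ioo x y, -K * f t ≤ f' t) :
    f x * exp (K * x) ≤ f y * exp (K * y) := by
  have hexp (t : ℝ) : HasDerivAt (fun s => exp (K * s)) (exp (K * t) * K) t := by
    simpa using ((hasDerivAt_id t).const_mul K).exp
  refine monotoneOn_of_hasDerivWithinAt_nonneg (f := fun t => f t * exp (K * t))
    (f' := fun t => f' t * exp (K * t) + f t * (exp (K * t) * K)) (convex_Icc x y)
    (hf.mul (continuous_exp.comp (continuous_const_mul K)).continuousOn) (fun t ht => ?_)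
    (fun t ht => ?_) (left_mem_Icc.2 hxy) (right_mem_Icc.2 hxy) hxy
  all_goals rw [interior_Icc] at ht
  · exact ((hf' t ht).mul (hexp t)).hasDerivWithinAt
  · have := hbound t ht
    have := exp_pos (K * t)
    nlinarith

theorem posDef_of_hasDerivAt_det_ge [DecidableEq ι] {b : ℝ → Matrix ι ι ℝ} {T K : ℝ}
    (hherm : ∀ t ∈ Ico 0 T, (b t).IsHermitian) (hcont : ∀ t ∈ Ico 0 T, ContinuousAt b t)
    (hderiv : ∀ t ∈ Ico 0 T, (b t).PosDef →
      ∃ D, HasDerivAt (fun s => (b s).det) D t ∧ -K * (b t).det ≤ D)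
    (h0 : (b 0).PosDef) : ∀ t ∈ Ico 0 T, (b t).PosDef := by
  choose! D hD hDK using hderiv
  -- a closed invariant set, on which positive semidefiniteness upgrades to definiteness
  set s := {t | (b t).PosSemidef ∧ (b 0).det ≤ (b t).det * exp (K * t)}
  have hpos : ∀ t ∈ s, (b t).PosDef := fun t ht => ht.1.posDef_iff_det_ne_zero.2 <| by
    have := h0.det_pos; have := exp_pos (K * t); nlinarith [ht.2]
  intro t₁ ht₁
  suffices Icc 0 t₁ ⊆ s from hpos t₁ (this ⟨ht₁.1, le_rfl⟩)
  refine IsClosed.Icc_subset_of_forall_mem_nhdsWithin ?_ ⟨h0.posSemidef, by simp⟩ ?_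
  · have hZ : IsClosed
        {p : Matrix ι ι ℝ × ℝ | p.1.PosSemidef ∧ (b 0).det ≤ p.1.det * exp (K * p.2)} :=
      (isClosed_setOf_posSemidef.preimage continuous_fst).inter (isClosed_le continuous_const
        (continuous_fst.matrix_det.mul (continuous_exp.comp (continuous_snd.const_mul K))))
    rw [inter_comm]
    exact ContinuousOn.preimage_isClosed_of_isClosed (f := fun t => (b t, t))
      (fun t ht => ((hcont t (Icc_subset_Ico_right ht₁.2 ht)).prodMk
        continuousAt_id).continuousWithinAt) isClosed_Icc hZ
  · rintro x ⟨hxs, hx⟩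
    have hxT : x ∈ Ico 0 T := ⟨hx.1, hx.2.trans ht₁.2⟩
    have hnear : ∀ᶠ z in 𝓝[≥] x, z ∈ Ico 0 T ∧ (b z).PosDef := by
      have hopen := hcont x hxT <|
        isClosed_setOf_isHermitian_and_not_posDef.isOpen_compl.mem_nhds fun h => h.2 (hpos x hxs)
      filter_upwards [nhdsWithin_le_nhds hopen,
        mem_of_superset (Ico_mem_nhdsGE hxT.2) (Ico_subset_Ico_left hx.1)] with z hz hzT
      exact ⟨hzT, of_not_not fun h => hz ⟨hherm z hzT, h⟩⟩
    obtain ⟨u, hxu, hu⟩ := mem_nhdsGE_iff_exists_Ico_subset.1 hnear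
    refine mem_nhdsGT_iff_exists_Ioo_subset.2 ⟨u, hxu, fun y hy => ?_⟩
    have hxy : Icc x y ⊆ {z | z ∈ Ico 0 T ∧ (b z).PosDef} := (Icc_subset_Ico_right hy.2).trans hu
    have hmono := mul_exp_le_mul_exp_of_hasDerivAt (f := fun t => (b t).det) (f' := D) hy.1.le
      (fun z hz => (hD z (hxy hz).1 (hxy hz).2).continuousAt.continuousWithinAt)
      (fun z hz => hD z (hxy (Ioo_subset_Icc_self hz)).1 (hxy (Ioo_subset_Icc_self hz)).2)
      (fun z hz => hDK z (hxy (Ioo_subset_Icc_self hz)).1 (hxy (Ioo_subset_Icc_self hz)).2)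
    exact ⟨(hxy (right_mem_Icc.2 hy.1.le)).2.posSemidef, hxs.2.trans hmono⟩

theorem stmt_17_general (n : ℕ) (b m a : ℝ → Matrix (Fin n) (Fin n) ℝ) (W T : ℝ)
    (hW : 0 < W) (hbound : ∃ C : ℝ, ∀ t (i j : Fin n), |m t i j| ≤ C)
    (hsymm : ∀ t, (b t).IsSymm)
    (hanti : ∀ t, (a t)ᵀ = -(a t))
    (hder : ∀ t ∈ Set.Ico (0 : ℝ) T, ∀ i j : Fin n, HasDerivAt (fun s => b s i j)
      ((b t * m t + a t * b t - (2 * W)⁻¹ • b t + (2 * W)⁻¹ • (b t)⁻¹) i j) t)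
    (h0 : (b 0).PosDef) :
    ∀ t ∈ Set.Ico (0 : ℝ) T, IsUnit (b t).det ∧ (b t).PosDef := by
  obtain ⟨C, hC⟩ := hbound
  have htrace (t : ℝ) : -(n * C) ≤ (m t).trace :=
    calc -(n * C) = ∑ _i : Fin n, -C := by simp
      _ ≤ ∑ i, m t i i := Finset.sum_le_sum fun i _ => neg_le_of_abs_le (hC t i i)
  have hcont (t : ℝ) (ht : t ∈ Ico 0 T) : ContinuousAt b t :=
    continuousAt_pi.2 fun i => continuousAt_pi.2 fun j => (hder t ht i j).continuousAt
  have hdet_deriv (t : ℝ) (hb : (b t).PosDef) :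
      -(n * (C + (2 * W)⁻¹)) * (b t).det ≤ (adjugate (b t) *
        (b t * m t + a t * b t - (2 * W)⁻¹ • b t + (2 * W)⁻¹ • (b t)⁻¹)).trace := by
    have hinv := le_trace_inv_mul_oldroydB (M := m t) hb (hanti t) (by positivity : 0 ≤ (2 * W)⁻¹)
    rw [Fintype.card_fin] at hinv
    rw [adjugate_eq_det_smul_inv (isUnit_iff_ne_zero.2 hb.det_pos.ne'), Matrix.smul_mul,
      trace_smul, smul_eq_mul]
    nlinarith [htrace t, hb.det_pos]
  have hpos := posDef_of_hasDerivAt_det_ge (fun t _ => isHermitian_iff_isSymm.2 (hsymm t)) hcont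
    (fun t ht hb => ⟨_, hasDerivAt_det (hder t ht), hdet_deriv t hb⟩) h0
  exact fun t ht => ⟨isUnit_iff_ne_zero.2 (hpos t ht).det_pos.ne', hpos t ht⟩

theorem stmt_17 (n : ℕ) (b m a : ℝ → Matrix (Fin n) (Fin n) ℝ) (W T : ℝ)
    (hW : 0 < W) (hT : 0 < T)
    (hm : Continuous m) (hbound : ∃ C : ℝ, ∀ t (i j : Fin n), |m t i j| ≤ C)
    (hsymm : ∀ t, (b t).IsSymm)
    (hanti : ∀ t, (a t)ᵀ = -(a t))
    (hC1 : ∀ i j : Fin n, ContDiff ℝ 1 (fun t => b t i j))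
    (hder : ∀ t ∈ Set.Ico (0 : ℝ) T, ∀ i j : Fin n, HasDerivAt (fun s => b s i j)
      ((b t * m t + a t * b t - (2 * W)⁻¹ • b t + (2 * W)⁻¹ • (b t)⁻¹) i j) t)
    (h0 : (b 0).PosDef) :
    ∀ t ∈ Set.Ico (0 : ℝ) T, IsUnit (b t).det ∧ (b t).PosDef :=
  stmt_17_general n b m a W T hW hbound hsymm hanti hder h0
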